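/- Additivity on subintervals: let [a,b] be a compact line and G : [a,b] → ℝ amenable. For every c ∈ [a,b], a function f is G-integrable on [a,b] if and only if it is G-integrable on both [a,c] and [c,b], and in that case ∫_a^b f dG = ∫_a^c f dG + ∫_c^b f dG − f(c)G(c). -/

import Mathlib

open Set Filter MeasureTheory

/-- A tagged partition of the interval `[a,b]` in a linear order `K`. -/
structure TaggedPartition (K : Type*) [LinearOrder K] (a b : K) where
  n : ℕ
  x : ℕ → K
  t : ℕ → K
  x_zero : x 0 = a
  x_last : x n = b
  mono : ∀ i < n, x i ≤ x (i + 1)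
  tag_mem : ∀ i < n, t (i + 1) ∈ Set.Icc (x i) (x (i + 1))

/-- A gauge on the interval `[a,b]` of `K`: each point of `[a,b]` is assigned a
relatively open subinterval of `[a,b]` containing it. -/
def IsGauge (K : Type*) [LinearOrder K] [TopologicalSpace K] (a b : K) (δ : K → Set K) : Prop :=
  ∀ x ∈ Set.Icc a b, x ∈ δ x ∧ (δ x).OrdConnected ∧ ∃ U, IsOpen U ∧ δ x = U ∩ Set.Icc a b

/-- A tagged partition is `δ`-fine when `(x_{i-1}, x_i] ⊆ δ(t_i)` for all `i`. -/
def TaggedPartition.IsFine {K : Type*} [LinearOrder K] {a b : K}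
    (P : TaggedPartition K a b) (δ : K → Set K) : Prop :=
  ∀ i < P.n, Set.Ioc (P.x i) (P.x (i + 1)) ⊆ δ (P.t (i + 1))

/-- The Riemann sum `S(f,G,P) = f(a)G(a) + Σ f(t_i)(G(x_i) - G(x_{i-1}))`. -/
noncomputable def riemannSum {K : Type*} [LinearOrder K] {a b : K}
    (f G : K → ℝ) (P : TaggedPartition K a b) : ℝ :=
  f a * G a + ∑ i ∈ Finset.range P.n, f (P.t (i + 1)) * (G (P.x (i + 1)) - G (P.x i))

/-- `f` has Kurzweil–Stieltjes integral `A` with respect to `G` over `[a,b]`. -/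
def HasIntegral {K : Type*} [LinearOrder K] [TopologicalSpace K]
    (f G : K → ℝ) (a b : K) (A : ℝ) : Prop :=
  ∀ ε : ℝ, 0 < ε → ∃ δ : K → Set K, IsGauge K a b δ ∧
    ∀ P : TaggedPartition K a b, P.IsFine δ → |riemannSum f G P - A| < ε

/-- `G` is amenable: right-continuous everywhere, and regulated (left limits exist at
left-dense points, right limits at right-dense points). -/
def Amenable {K : Type*} [LinearOrder K] [TopologicalSpace K] [BoundedOrder K]
    (G : K → ℝ) : Prop :=
  (∀ x : K, ContinuousWithinAt G (Set.Ici x) x) ∧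
  (∀ x : K, x ≠ ⊥ → (¬ ∃ y, y ⋖ x) → ∃ l, Filter.Tendsto G (nhdsWithin x (Set.Iio x)) (nhds l)) ∧
  (∀ x : K, x ≠ ⊤ → (¬ ∃ y, x ⋖ y) → ∃ l, Filter.Tendsto G (nhdsWithin x (Set.Ioi x)) (nhds l))

open Classical in
/-- `L_G(x)`: `0` at the least element, `G` of the immediate predecessor if `x` is
left-isolated, and the left limit of `G` at `x` if `x` is left-dense. -/
noncomputable def Lfun {K : Type*} [LinearOrder K] [TopologicalSpace K] [BoundedOrder K]
    (G : K → ℝ) (x : K) : ℝ :=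
  if x = ⊥ then 0
  else if h : ∃ y, y ⋖ x then G h.choose
  else Function.leftLim G x

/-- The set of variation sums of `G` over divisions of `[a,b]`. -/
def varSums {K : Type*} [LinearOrder K] (G : K → ℝ) (a b : K) : Set ℝ :=
  {v | ∃ (n : ℕ) (x : ℕ → K), x 0 = a ∧ x n = b ∧ (∀ i < n, x i ≤ x (i + 1)) ∧
        v = ∑ i ∈ Finset.range n, |G (x (i + 1)) - G (x i)|}

/-- `S` is null for the outer measure induced by `μ` via covers by countably many
open intervals. -/
def GNull {K : Type*} [LinearOrder K] [TopologicalSpace K] [MeasurableSpace K]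
    (μ : MeasureTheory.Measure K) (S : Set K) : Prop :=
  ∀ ε : ℝ, 0 < ε → ∃ I : ℕ → Set K, (∀ n, IsOpen (I n) ∧ (I n).OrdConnected) ∧
    S ⊆ ⋃ n, I n ∧ ∑' n, μ (I n) < ENNReal.ofReal ε

/-!
Joining a partition of `[a, c]` to one of `[c, b]` gives a partition of `[a, b]` whose Riemann
sum is the sum of the two minus `f c * G c`, the initial term of the right-hand sum. Conversely,
clipping a partition of `[a, b]` by `min · c` and `max · c` splits it into partitions of
`[a, c]` and `[c, b]` with the same relation between the sums, as long as every interval whose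
interior contains `c` is tagged at `c`; a gauge with `c ∉ δ t` for `t ≠ c` forces this.
Clipping shows that integrability on both halves gives integrability on `[a, b]` with the stated
value; joining and the Cauchy criterion give the converse. Cousin's lemma (every gauge admits a
fine partition, proved by a supremum argument) makes the filter of fine partitions proper, so
limits along it are unique and the Cauchy criterion holds.
-/

open Topology

section Glue

variable {K : Type*}

def glue (n : ℕ) (x y : ℕ → K) (i : ℕ) : K := if i ≤ n then x i else y (i - n)

lemma glue_of_le {n i : ℕ} (x y : ℕ → K) (h : i ≤ n) : glue n x y i = x i := if_pos h

lemma glue_add_succ (n : ℕ) (x y : ℕ → K) (j : ℕ) : glue n x y (n + (j + 1)) = y (j + 1) := by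
  simp [glue]

lemma glue_add {n : ℕ} {x y : ℕ → K} (h : x n = y 0) (j : ℕ) : glue n x y (n + j) = y j := by
  rcases j with _ | j
  · simpa [glue] using h
  · exact glue_add_succ n x y j

lemma forall_glue_segment {n m : ℕ} {x y s r : ℕ → K} (hxy : x n = y 0) {p : K → K → K → Prop}
    (h₁ : ∀ i < n, p (x i) (x (i + 1)) (s (i + 1)))
    (h₂ : ∀ j < m, p (y j) (y (j + 1)) (r (j + 1))) :
    ∀ i < n + m, p (glue n x y i) (glue n x y (i + 1)) (glue n s r (i + 1)) := by
  intro i hi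
  rcases lt_or_ge i n with h | h
  · rw [glue_of_le _ _ h.le, glue_of_le _ _ h, glue_of_le _ _ h]
    exact h₁ i h
  · obtain ⟨j, rfl⟩ := Nat.exists_eq_add_of_le h
    rw [glue_add hxy, add_assoc, glue_add hxy, glue_add_succ]
    exact h₂ j (by omega)

lemma sum_glue_segment {M : Type*} [AddCommMonoid M] {n m : ℕ} {x y s r : ℕ → K}
    (hxy : x n = y 0) (g : K → K → K → M) :
    ∑ i ∈ Finset.range (n + m), g (glue n x y i) (glue n x y (i + 1)) (glue n s r (i + 1)) =
      ∑ i ∈ Finset.range n, g (x i) (x (i + 1)) (s (i + 1)) +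
        ∑ j ∈ Finset.range m, g (y j) (y (j + 1)) (r (j + 1)) := by
  rw [Finset.sum_range_add]
  congr 1
  · refine Finset.sum_congr rfl fun i hi => ?_
    have h := Finset.mem_range.1 hi
    rw [glue_of_le _ _ h.le, glue_of_le _ _ h, glue_of_le _ _ h]
  · refine Finset.sum_congr rfl fun j _ => ?_
    rw [glue_add hxy, add_assoc, glue_add hxy, glue_add_succ]

end Glue

namespace TaggedPartition

variable {K : Type*} [LinearOrder K] {a b c : K} {δ : K → Set K}

def single (a : K) : TaggedPartition K a a where
  n := 0
  x _ := a
  t _ := a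
  x_zero := rfl
  x_last := rfl
  mono _ h := absurd h (Nat.not_lt_zero _)
  tag_mem _ h := absurd h (Nat.not_lt_zero _)

lemma isFine_single (a : K) (δ : K → Set K) : (single a).IsFine δ :=
  fun _ h => absurd h (Nat.not_lt_zero _)

def segment {τ : K} (hτ : τ ∈ Icc a b) : TaggedPartition K a b where
  n := 1
  x i := if i = 0 then a else b
  t _ := τ
  x_zero := rfl
  x_last := rfl
  mono _ h := by simpa [Nat.lt_one_iff.1 h] using hτ.1.trans hτ.2
  tag_mem _ h := by simpa [Nat.lt_one_iff.1 h] using hτ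

lemma isFine_segment {τ : K} (hτ : τ ∈ Icc a b) (h : Ioc a b ⊆ δ τ) : (segment hτ).IsFine δ :=
  fun _ hi => by simpa [segment, Nat.lt_one_iff.1 hi] using h

def join (P : TaggedPartition K a c) (Q : TaggedPartition K c b) : TaggedPartition K a b where
  n := P.n + Q.n
  x := glue P.n P.x Q.x
  t := glue P.n P.t Q.t
  x_zero := by rw [glue_of_le _ _ (Nat.zero_le _), P.x_zero]
  x_last := by rw [glue_add (P.x_last.trans Q.x_zero.symm), Q.x_last]
  mono := forall_glue_segment (s := P.t) (r := Q.t) (p := fun u v _ => u ≤ v)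
    (P.x_last.trans Q.x_zero.symm) P.mono Q.mono
  tag_mem := forall_glue_segment (p := fun u v τ => τ ∈ Icc u v) (P.x_last.trans Q.x_zero.symm)
    P.tag_mem Q.tag_mem

lemma IsFine.join {P : TaggedPartition K a c} {Q : TaggedPartition K c b} (hP : P.IsFine δ)
    (hQ : Q.IsFine δ) : (P.join Q).IsFine δ :=
  fun i hi => forall_glue_segment (p := fun u v τ => Ioc u v ⊆ δ τ)
    (P.x_last.trans Q.x_zero.symm) hP hQ i hi

lemma IsFine.mono {P : TaggedPartition K a b} {δ' : K → Set K} (hP : P.IsFine δ)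
    (h : ∀ t, δ t ⊆ δ' t) : P.IsFine δ' :=
  fun i hi => (hP i hi).trans (h _)

lemma riemannSum_join (f G : K → ℝ) (P : TaggedPartition K a c) (Q : TaggedPartition K c b) :
    riemannSum f G (P.join Q) = riemannSum f G P + riemannSum f G Q - f c * G c := by
  have := sum_glue_segment (m := Q.n) (s := P.t) (r := Q.t) (P.x_last.trans Q.x_zero.symm)
    fun u v τ => f τ * (G v - G u)
  simp only [riemannSum, join, this]
  ring

end TaggedPartition

section Clip

variable {K : Type*} [LinearOrder K] {x y t c : K} {δ δ' : K → Set K}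

lemma mul_sub_min_add_mul_sub_max (f G : K → ℝ) (hxt : x ≤ t) (hty : t ≤ y)
    (h : x < c → c < y → t = c) :
    f (min t c) * (G (min y c) - G (min x c)) + f (max t c) * (G (max y c) - G (max x c)) =
      f t * (G y - G x) := by
  rcases le_or_gt y c with hyc | hcy
  · have htc := hty.trans hyc
    rw [min_eq_left hyc, min_eq_left htc, min_eq_left (hxt.trans htc), max_eq_right hyc,
      max_eq_right (hxt.trans htc)]
    ring
  rcases le_or_gt c x with hcx | hxc
  · have hct := hcx.trans hxt
    rw [min_eq_right (hct.trans hty), min_eq_right hct, min_eq_right hcx,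
      max_eq_left (hct.trans hty), max_eq_left hct, max_eq_left hcx]
    ring
  · obtain rfl := h hxc hcy
    rw [min_eq_right hcy.le, min_self, min_eq_left hxc.le, max_eq_left hcy.le, max_self,
      max_eq_right hxc.le]
    ring

lemma Ioc_min_subset (hty : t ≤ y) (hδ : Ioc x y ⊆ δ t)
    (hleft : ∀ t ≤ c, δ t ∩ Iic c ⊆ δ' t) (hc : ∀ t, c ∈ δ t → t = c) :
    Ioc (min x c) (min y c) ⊆ δ' (min t c) := by
  rintro z ⟨hxz, hzy⟩
  have hzc : z ≤ c := hzy.trans (min_le_right _ _)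
  have hz : z ∈ Ioc x y :=
    ⟨(min_lt_iff.1 hxz).resolve_right hzc.not_gt, hzy.trans (min_le_left _ _)⟩
  rcases le_or_gt t c with htc | hct
  · rw [min_eq_left htc]
    exact hleft t htc ⟨hδ hz, hzc⟩
  · exact absurd (hc t (hδ ⟨hz.1.trans_le hzc, hct.le.trans hty⟩)) hct.ne'

lemma Ioc_max_subset (hxt : x ≤ t) (hδ : Ioc x y ⊆ δ t)
    (hright : ∀ t, c ≤ t → δ t ∩ Ici c ⊆ δ' t) (hc : ∀ t, c ∈ δ t → t = c) :
    Ioc (max x c) (max y c) ⊆ δ' (max t c) := by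
  rintro z ⟨hxz, hzy⟩
  obtain ⟨hxz, hcz⟩ := max_lt_iff.1 hxz
  have hz : z ∈ Ioc x y := ⟨hxz, (le_max_iff.1 hzy).resolve_right hcz.not_ge⟩
  rcases le_or_gt c t with hct | htc
  · rw [max_eq_left hct]
    exact hright t hct ⟨hδ hz, hcz.le⟩
  · exact absurd (hc t (hδ ⟨hxt.trans_lt htc, hcz.le.trans hz.2⟩)) htc.ne

end Clip

namespace TaggedPartition

variable {K : Type*} [LinearOrder K] {a b c : K} {δ δ' : K → Set K}

def clipLeft (P : TaggedPartition K a b) (hac : a ≤ c) (hcb : c ≤ b) : TaggedPartition K a c where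
  n := P.n
  x i := min (P.x i) c
  t i := min (P.t i) c
  x_zero := by rw [P.x_zero, min_eq_left hac]
  x_last := by rw [P.x_last, min_eq_right hcb]
  mono i hi := min_le_min_right c (P.mono i hi)
  tag_mem i hi := ⟨min_le_min_right c (P.tag_mem i hi).1, min_le_min_right c (P.tag_mem i hi).2⟩

def clipRight (P : TaggedPartition K a b) (hac : a ≤ c) (hcb : c ≤ b) : TaggedPartition K c b where
  n := P.n
  x i := max (P.x i) c
  t i := max (P.t i) c
  x_zero := by rw [P.x_zero, max_eq_right hac]
  x_last := by rw [P.x_last, max_eq_left hcb]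
  mono i hi := max_le_max_right c (P.mono i hi)
  tag_mem i hi := ⟨max_le_max_right c (P.tag_mem i hi).1, max_le_max_right c (P.tag_mem i hi).2⟩

variable {P : TaggedPartition K a b} (hac : a ≤ c) (hcb : c ≤ b)

lemma IsFine.clipLeft (hP : P.IsFine δ) (hleft : ∀ t ≤ c, δ t ∩ Iic c ⊆ δ' t)
    (hc : ∀ t, c ∈ δ t → t = c) : (P.clipLeft hac hcb).IsFine δ' :=
  fun i hi => Ioc_min_subset (P.tag_mem i hi).2 (hP i hi) hleft hc

lemma IsFine.clipRight (hP : P.IsFine δ) (hright : ∀ t, c ≤ t → δ t ∩ Ici c ⊆ δ' t)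
    (hc : ∀ t, c ∈ δ t → t = c) : (P.clipRight hac hcb).IsFine δ' :=
  fun i hi => Ioc_max_subset (P.tag_mem i hi).1 (hP i hi) hright hc

lemma riemannSum_clipLeft_add_clipRight (f G : K → ℝ)
    (hP : ∀ i < P.n, c ∈ Ioo (P.x i) (P.x (i + 1)) → P.t (i + 1) = c) :
    riemannSum f G (P.clipLeft hac hcb) + riemannSum f G (P.clipRight hac hcb) =
      riemannSum f G P + f c * G c := by
  have hsum := Finset.sum_congr rfl fun i hi => mul_sub_min_add_mul_sub_max f G
    (P.tag_mem i (Finset.mem_range.1 hi)).1 (P.tag_mem i (Finset.mem_range.1 hi)).2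
    fun h₁ h₂ => hP i (Finset.mem_range.1 hi) ⟨h₁, h₂⟩
  rw [Finset.sum_add_distrib] at hsum
  simp only [riemannSum, TaggedPartition.clipLeft, TaggedPartition.clipRight]
  linarith

end TaggedPartition

section SplitGauge

variable {K : Type*} [LinearOrder K] {c t : K} {δ₁ δ₂ : K → Set K} {V : Set K}

def splitGauge (c : K) (δ₁ δ₂ : K → Set K) (V : Set K) (t : K) : Set K :=
  if t < c then δ₁ t ∩ Iio c else if c < t then δ₂ t ∩ Ioi c else V


lemma splitGauge_of_lt (h : t < c) : splitGauge c δ₁ δ₂ V t = δ₁ t ∩ Iio c := if_pos h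

lemma splitGauge_of_gt (h : c < t) : splitGauge c δ₁ δ₂ V t = δ₂ t ∩ Ioi c := by
  rw [splitGauge, if_neg h.not_gt, if_pos h]

lemma splitGauge_self : splitGauge c δ₁ δ₂ V c = V := by
  simp [splitGauge]

lemma eq_of_mem_splitGauge (h : c ∈ splitGauge c δ₁ δ₂ V t) : t = c := by
  by_contra hne
  rcases lt_or_gt_of_ne hne with htc | hct
  · rw [splitGauge_of_lt htc] at h
    exact lt_irrefl c h.2
  · rw [splitGauge_of_gt hct] at h
    exact lt_irrefl c h.2

lemma splitGauge_inter_Iic_subset (hV : V ∩ Iic c ⊆ δ₁ c) (htc : t ≤ c) :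
    splitGauge c δ₁ δ₂ V t ∩ Iic c ⊆ δ₁ t := by
  rcases htc.lt_or_eq with htc | rfl
  · rw [splitGauge_of_lt htc]
    exact inter_subset_left.trans inter_subset_left
  · rwa [splitGauge_self]

lemma splitGauge_inter_Ici_subset (hV : V ∩ Ici c ⊆ δ₂ c) (hct : c ≤ t) :
    splitGauge c δ₁ δ₂ V t ∩ Ici c ⊆ δ₂ t := by
  rcases hct.lt_or_eq with hct | rfl
  · rw [splitGauge_of_gt hct]
    exact inter_subset_left.trans inter_subset_left
  · rwa [splitGauge_self]

end SplitGauge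

section Gauge

variable {K : Type*} [LinearOrder K] [TopologicalSpace K] {a b c : K} {δ δ' δ₁ δ₂ : K → Set K}

lemma isGauge_Icc (a b : K) : IsGauge K a b fun _ => Icc a b :=
  fun _ ht => ⟨ht, ordConnected_Icc, univ, isOpen_univ, (univ_inter _).symm⟩

lemma IsGauge.inter (h : IsGauge K a b δ) (h' : IsGauge K a b δ') :
    IsGauge K a b fun t => δ t ∩ δ' t := by
  intro t ht
  obtain ⟨hm, hconn, U, hU, he⟩ := h t ht
  obtain ⟨hm', hconn', U', hU', he'⟩ := h' t ht
  refine ⟨⟨hm, hm'⟩, hconn.inter hconn', U ∩ U', hU.inter hU', ?_⟩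
  show δ t ∩ δ' t = _
  rw [he, he', ← inter_inter_distrib_right]

lemma IsGauge.restrict {a' b' : K} (h : IsGauge K a b δ) (ha : a ≤ a') (hb : b' ≤ b) :
    IsGauge K a' b' fun t => δ t ∩ Icc a' b' := by
  intro t ht
  obtain ⟨hm, hconn, U, hU, he⟩ := h t ⟨ha.trans ht.1, ht.2.trans hb⟩
  refine ⟨⟨hm, ht⟩, hconn.inter ordConnected_Icc, U, hU, ?_⟩
  show δ t ∩ _ = _
  rw [he, inter_assoc, Icc_inter_Icc, sup_eq_right.2 ha, inf_eq_right.2 hb]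

variable [OrderTopology K]

theorem IsOpen.ordConnectedComponent {W : Set K} (hW : IsOpen W) (c : K) :
    IsOpen (ordConnectedComponent W c) := by
  refine isOpen_iff_mem_nhds.2 fun y hy => ?_
  rw [ordConnectedComponent_eq hy, ordConnectedComponent_mem_nhds]
  exact hW.mem_nhds (ordConnectedComponent_subset hy)

lemma isGauge_splitGauge (hac : a ≤ c) (hcb : c ≤ b) (h₁ : IsGauge K a c δ₁)
    (h₂ : IsGauge K c b δ₂) {V : Set K}
    (hV : c ∈ V ∧ V.OrdConnected ∧ ∃ W, IsOpen W ∧ V = W ∩ Icc a b) :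
    IsGauge K a b (splitGauge c δ₁ δ₂ V) := by
  intro t ht
  rcases lt_trichotomy t c with htc | rfl | hct
  · obtain ⟨hm, hconn, U, hU, he⟩ := h₁ t ⟨ht.1, htc.le⟩
    rw [splitGauge_of_lt htc]
    refine ⟨⟨hm, htc⟩, hconn.inter ordConnected_Iio, U ∩ Iio c, hU.inter isOpen_Iio, ?_⟩
    ext y
    simp only [he, mem_inter_iff, mem_Icc, mem_Iio]
    grind
  · rw [splitGauge_self]
    exact hV
  · obtain ⟨hm, hconn, U, hU, he⟩ := h₂ t ⟨hct.le, ht.2⟩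
    rw [splitGauge_of_gt hct]
    refine ⟨⟨hm, hct⟩, hconn.inter ordConnected_Ioi, U ∩ Ioi c, hU.inter isOpen_Ioi, ?_⟩
    ext y
    simp only [he, mem_inter_iff, mem_Icc, mem_Ioi]
    grind

lemma exists_isGauge_split (hac : a ≤ c) (hcb : c ≤ b) (h₁ : IsGauge K a c δ₁)
    (h₂ : IsGauge K c b δ₂) :
    ∃ δ, IsGauge K a b δ ∧ (∀ t ≤ c, δ t ∩ Iic c ⊆ δ₁ t) ∧
      (∀ t, c ≤ t → δ t ∩ Ici c ⊆ δ₂ t) ∧ ∀ t, c ∈ δ t → t = c := by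
  obtain ⟨hc₁, -, U₁, hU₁, he₁⟩ := h₁ c ⟨hac, le_rfl⟩
  obtain ⟨hc₂, -, U₂, hU₂, he₂⟩ := h₂ c ⟨le_rfl, hcb⟩
  rw [he₁] at hc₁
  rw [he₂] at hc₂
  set W := ordConnectedComponent (U₁ ∩ U₂) c
  have hWU : W ⊆ U₁ ∩ U₂ := ordConnectedComponent_subset
  have hW : W.OrdConnected := inferInstance
  refine ⟨splitGauge c δ₁ δ₂ (W ∩ Icc a b), isGauge_splitGauge hac hcb h₁ h₂
    ⟨⟨self_mem_ordConnectedComponent.2 ⟨hc₁.1, hc₂.1⟩, hac, hcb⟩, hW.inter ordConnected_Icc,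
      W, (hU₁.inter hU₂).ordConnectedComponent c, rfl⟩,
    fun t => splitGauge_inter_Iic_subset ?_, fun t => splitGauge_inter_Ici_subset ?_,
    fun t => eq_of_mem_splitGauge⟩
  · rintro y ⟨⟨hyW, hay, -⟩, hyc⟩
    rw [he₁]
    exact ⟨(hWU hyW).1, hay, hyc⟩
  · rintro y ⟨⟨hyW, -, hyb⟩, hcy⟩
    rw [he₂]
    exact ⟨(hWU hyW).2, hcy, hyb⟩

end Gauge

section Cousin

variable {K : Type*} [LinearOrder K] [TopologicalSpace K] [OrderTopology K] {a b : K}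

lemma exists_isLUB_of_subset_Icc [CompactIccSpace K] {T : Set K} (hT : T ⊆ Icc a b)
    (hne : T.Nonempty) : ∃ s, IsLUB T s := by
  obtain ⟨s, -, hs⟩ := (isCompact_Icc.of_isClosed_subset isClosed_closure
    (closure_minimal hT isClosed_Icc)).exists_isLUB hne.closure
  exact ⟨s, by rwa [IsLUB, upperBounds_closure] at hs⟩

lemma exists_covBy_or_Ioc_subset {s : K} {U : Set K} (hU : U ∈ 𝓝 s) (hsb : s < b) :
    ∃ v, s < v ∧ v ≤ b ∧ (s ⋖ v ∨ Ioc s v ⊆ U) := by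
  obtain ⟨u, hsu, hIco⟩ := exists_Ico_subset_of_mem_nhds hU ⟨b, hsb⟩
  have hsw : s < min u b := lt_min hsu hsb
  by_cases hcov : s ⋖ min u b
  · exact ⟨min u b, hsw, min_le_right _ _, Or.inl hcov⟩
  · obtain ⟨v, hsv, hvw⟩ := (not_covBy_iff hsw).1 hcov
    refine ⟨v, hsv, hvw.le.trans (min_le_right _ _), Or.inr fun z hz => hIco ⟨hz.1.le, ?_⟩⟩
    exact hz.2.trans_lt (hvw.trans_le (min_le_left _ _))

theorem IsGauge.exists_isFine [CompactIccSpace K] {δ : K → Set K} (hab : a ≤ b)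
    (hδ : IsGauge K a b δ) : ∃ P : TaggedPartition K a b, P.IsFine δ := by
  set T := {y ∈ Icc a b | ∃ P : TaggedPartition K a y, P.IsFine δ}
  have haT : a ∈ T := ⟨left_mem_Icc.2 hab, _, TaggedPartition.isFine_single a δ⟩
  have extend : ∀ {y u τ : K}, y ∈ T → u ≤ b → (hτ : τ ∈ Icc y u) → Ioc y u ⊆ δ τ → u ∈ T :=
    fun ⟨hy, P, hP⟩ hub hτ h => ⟨⟨hy.1.trans (hτ.1.trans hτ.2), hub⟩,
      P.join (.segment hτ), hP.join (TaggedPartition.isFine_segment hτ h)⟩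
  obtain ⟨s, hs⟩ := exists_isLUB_of_subset_Icc (fun y hy => hy.1) ⟨a, haT⟩
  have has : a ≤ s := hs.1 haT
  have hsb : s ≤ b := hs.2 fun y hy => hy.1.2
  obtain ⟨hsδ, -, U, hU, he⟩ := hδ s ⟨has, hsb⟩
  rw [he] at hsδ
  have hUs : U ∈ 𝓝 s := hU.mem_nhds hsδ.1
  have hIoc : ∀ {y u}, a ≤ y → u ≤ b → Ioc y u ⊆ U → Ioc y u ⊆ δ s := fun hay hub h z hz => by
    rw [he]
    exact ⟨h hz, hay.trans hz.1.le, hz.2.trans hub⟩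
  have hsT : s ∈ T := by
    rcases has.lt_or_eq with has | rfl
    · obtain ⟨l, hls, hlU⟩ := exists_Ioc_subset_of_mem_nhds hUs ⟨a, has⟩
      obtain ⟨y, hyT, hly, hys⟩ := hs.exists_between hls
      exact extend hyT hsb ⟨hys, le_rfl⟩
        (hIoc hyT.1.1 hsb ((Ioc_subset_Ioc_left hly.le).trans hlU))
    · exact haT
  obtain rfl : s = b := by
    by_contra hne
    obtain ⟨v, hsv, hvb, hcov | hsub⟩ := exists_covBy_or_Ioc_subset hUs (hsb.lt_of_ne hne)
    · have hvT := extend hsT hvb ⟨hsv.le, le_rfl⟩ (by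
        rw [hcov.Ioc_eq, singleton_subset_iff]
        exact (hδ v ⟨has.trans hsv.le, hvb⟩).1)
      exact (hs.1 hvT).not_gt hsv
    · exact (hs.1 (extend hsT hvb ⟨le_rfl, hsv.le⟩ (hIoc has hvb hsub))).not_gt hsv
  exact hsT.2

end Cousin

section Integral

variable {K : Type*} [LinearOrder K] [TopologicalSpace K] {a b c : K} {f G : K → ℝ} {A : ℝ}

def fineFilter (K : Type*) [LinearOrder K] [TopologicalSpace K] (a b : K) :
    Filter (TaggedPartition K a b) :=
  ⨅ (δ) (_ : IsGauge K a b δ), 𝓟 {P | P.IsFine δ}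

lemma hasBasis_fineFilter :
    (fineFilter K a b).HasBasis (IsGauge K a b) fun δ => {P | P.IsFine δ} :=
  hasBasis_biInf_principal'
    (fun _ hδ _ hδ' => ⟨_, hδ.inter hδ',
      fun _ (hP : TaggedPartition.IsFine _ _) => hP.mono fun _ => inter_subset_left,
      fun _ (hP : TaggedPartition.IsFine _ _) => hP.mono fun _ => inter_subset_right⟩)
    ⟨_, isGauge_Icc a b⟩

lemma hasIntegral_iff_tendsto :
    HasIntegral f G a b A ↔ Tendsto (riemannSum f G) (fineFilter K a b) (𝓝 A) := by
  simp only [hasBasis_fineFilter.tendsto_iff Metric.nhds_basis_ball, Metric.mem_ball,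
    Real.dist_eq]
  rfl

lemma HasIntegral.exists_isGauge_abs_sub_lt (hA : HasIntegral f G a b A) {ε : ℝ} (hε : 0 < ε) :
    ∃ δ, IsGauge K a b δ ∧ ∀ (P P' : TaggedPartition K a c) (Q Q' : TaggedPartition K c b),
      P.IsFine δ → P'.IsFine δ → Q.IsFine δ → Q'.IsFine δ →
      |riemannSum f G P + riemannSum f G Q - (riemannSum f G P' + riemannSum f G Q')| < ε := by
  obtain ⟨δ, hδ, hS⟩ := hA (ε / 2) (half_pos hε)
  refine ⟨δ, hδ, fun P P' Q Q' hP hP' hQ hQ' => ?_⟩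
  have h := hS _ (hP.join hQ)
  have h' := hS _ (hP'.join hQ')
  rw [TaggedPartition.riemannSum_join, abs_lt] at h h'
  rw [abs_lt]
  constructor <;> linarith

variable [OrderTopology K]

lemma HasIntegral.add_adjacent {A₁ A₂ : ℝ} (h₁ : HasIntegral f G a c A₁)
    (h₂ : HasIntegral f G c b A₂) (hac : a ≤ c) (hcb : c ≤ b) :
    HasIntegral f G a b (A₁ + A₂ - f c * G c) := by
  intro ε hε
  obtain ⟨δ₁, hδ₁, hS₁⟩ := h₁ (ε / 2) (half_pos hε)
  obtain ⟨δ₂, hδ₂, hS₂⟩ := h₂ (ε / 2) (half_pos hε)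
  obtain ⟨δ, hδ, hleft, hright, hc⟩ := exists_isGauge_split hac hcb hδ₁ hδ₂
  refine ⟨δ, hδ, fun P hP => ?_⟩
  have hsum := P.riemannSum_clipLeft_add_clipRight hac hcb f G
    fun i hi hci => hc _ (hP i hi (Ioo_subset_Ioc_self hci))
  have h₁ := hS₁ _ (hP.clipLeft hac hcb hleft hc)
  have h₂ := hS₂ _ (hP.clipRight hac hcb hright hc)
  rw [abs_lt] at h₁ h₂ ⊢
  constructor <;> linarith

variable [CompactIccSpace K]

lemma fineFilter_neBot (hab : a ≤ b) : (fineFilter K a b).NeBot :=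
  hasBasis_fineFilter.neBot_iff.2 fun hδ => hδ.exists_isFine hab

lemma HasIntegral.unique {A' : ℝ} (hab : a ≤ b) (h : HasIntegral f G a b A)
    (h' : HasIntegral f G a b A') : A = A' :=
  have := fineFilter_neBot hab
  tendsto_nhds_unique (hasIntegral_iff_tendsto.1 h) (hasIntegral_iff_tendsto.1 h')

lemma exists_hasIntegral_of_cauchy (hab : a ≤ b)
    (h : ∀ ε > 0, ∃ δ, IsGauge K a b δ ∧ ∀ P Q : TaggedPartition K a b, P.IsFine δ →
      Q.IsFine δ → |riemannSum f G P - riemannSum f G Q| < ε) :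
    ∃ A, HasIntegral f G a b A := by
  have := fineFilter_neBot hab
  simp_rw [hasIntegral_iff_tendsto, ← cauchy_map_iff_exists_tendsto, cauchy_map_iff',
    hasBasis_fineFilter.prod_self.tendsto_iff Metric.uniformity_basis_dist]
  intro ε hε
  obtain ⟨δ, hδ, hS⟩ := h ε hε
  exact ⟨δ, hδ, fun p hp => by simpa [Real.dist_eq] using hS _ _ hp.1 hp.2⟩

lemma HasIntegral.exists_hasIntegral_left (hA : HasIntegral f G a b A) (hac : a ≤ c)
    (hcb : c ≤ b) : ∃ A₁, HasIntegral f G a c A₁ := by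
  refine exists_hasIntegral_of_cauchy hac fun ε hε => ?_
  obtain ⟨δ, hδ, hS⟩ := hA.exists_isGauge_abs_sub_lt (c := c) hε
  obtain ⟨Q, hQ⟩ := (hδ.restrict hac le_rfl).exists_isFine hcb
  have hQ : Q.IsFine δ := hQ.mono fun _ => inter_subset_left
  refine ⟨_, hδ.restrict le_rfl hcb, fun P P' hP hP' => ?_⟩
  simpa only [add_sub_add_right_eq_sub] using
    hS P P' Q Q (hP.mono fun _ => inter_subset_left) (hP'.mono fun _ => inter_subset_left) hQ hQ

lemma HasIntegral.exists_hasIntegral_right (hA : HasIntegral f G a b A) (hac : a ≤ c)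
    (hcb : c ≤ b) : ∃ A₂, HasIntegral f G c b A₂ := by
  refine exists_hasIntegral_of_cauchy hcb fun ε hε => ?_
  obtain ⟨δ, hδ, hS⟩ := hA.exists_isGauge_abs_sub_lt (c := c) hε
  obtain ⟨P, hP⟩ := (hδ.restrict le_rfl hcb).exists_isFine hac
  have hP : P.IsFine δ := hP.mono fun _ => inter_subset_left
  refine ⟨_, hδ.restrict hac le_rfl, fun Q Q' hQ hQ' => ?_⟩
  simpa only [add_sub_add_left_eq_sub] using
    hS P P Q Q' hP hP (hQ.mono fun _ => inter_subset_left) (hQ'.mono fun _ => inter_subset_left)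

end Integral

theorem additivity_on_subintervals_general {K : Type*} [LinearOrder K] [TopologicalSpace K]
    [OrderTopology K] [CompactSpace K] [BoundedOrder K] (G f : K → ℝ) (c : K) :
    ((∃ A, HasIntegral f G (⊥ : K) ⊤ A) ↔
      (∃ A₁, HasIntegral f G (⊥ : K) c A₁) ∧ (∃ A₂, HasIntegral f G c (⊤ : K) A₂)) ∧
    ∀ A A₁ A₂, HasIntegral f G (⊥ : K) ⊤ A → HasIntegral f G (⊥ : K) c A₁ →
      HasIntegral f G c (⊤ : K) A₂ → A = A₁ + A₂ - f c * G c := by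
  have : CompactIccSpace K := ⟨fun {_ _} => isClosed_Icc.isCompact⟩
  have hbot : (⊥ : K) ≤ c := bot_le
  have htop : c ≤ (⊤ : K) := le_top
  refine ⟨⟨?_, ?_⟩, ?_⟩
  · rintro ⟨A, hA⟩
    exact ⟨hA.exists_hasIntegral_left hbot htop, hA.exists_hasIntegral_right hbot htop⟩
  · rintro ⟨⟨A₁, h₁⟩, A₂, h₂⟩
    exact ⟨_, h₁.add_adjacent h₂ hbot htop⟩
  · intro A A₁ A₂ hA h₁ h₂
    exact hA.unique (hbot.trans htop) (h₁.add_adjacent h₂ hbot htop)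

theorem additivity_on_subintervals {K : Type*} [LinearOrder K] [TopologicalSpace K]
    [OrderTopology K] [CompactSpace K] [BoundedOrder K] (G f : K → ℝ) (hG : Amenable G)
    (c : K) :
    ((∃ A, HasIntegral f G (⊥ : K) ⊤ A) ↔
      (∃ A₁, HasIntegral f G (⊥ : K) c A₁) ∧ (∃ A₂, HasIntegral f G c (⊤ : K) A₂)) ∧
    ∀ A A₁ A₂, HasIntegral f G (⊥ : K) ⊤ A → HasIntegral f G (⊥ : K) c A₁ →
      HasIntegral f G c (⊤ : K) A₂ → A = A₁ + A₂ - f c * G c :=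
  additivity_on_subintervals_general G f c
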